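/- arXiv:1011.1708 — 3 statements merged into one kernel-verified Lean document; each statement's English description precedes it below -/
import Mathlib

section
/- Let p and q be two probability mass functions on a finite alphabet A such that the L1 distance ||p - q||_1 = Σ_{c∈A} |p(c) - q(c)| is at most 1/2. Then |H(p) - H(q)| ≤ -||p - q||_1 · log₂(||p - q||_1 / |A|), where H denotes the Shannon entropy H(p) = -Σ_{c∈A} p(c) log₂ p(c). -/
/-!
With η(t) = -t log t, the entropy is H(p) = Σ η(p c) / log 2. Since η is concave, its increments
η(t + d) - η(t) decrease in t; comparing t with 0 and with 1 - d, and using η(1 - d) ≤ η(d) for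
d ≤ 1/2, gives |η x - η y| ≤ η |x - y| for x, y ∈ [0, 1] with |x - y| ≤ 1/2. Summing over the
alphabet and applying Jensen's inequality to η with uniform weights bounds Σ η |p c - q c| by
|A| η(‖p - q‖₁ / |A|) = -‖p - q‖₁ log(‖p - q‖₁ / |A|).
-/

open Finset

noncomputable def entH {A : Type*} [Fintype A] (p : A → ℝ) : ℝ :=
  -∑ x : A, p x * Real.logb 2 (p x)

def L1 {A : Type*} [Fintype A] (p q : A → ℝ) : ℝ := ∑ x : A, |p x - q x|

open Real Set

lemma ConcaveOn.map_add_sub_map_le {𝕜 : Type*} [Field 𝕜] [LinearOrder 𝕜]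
    [IsStrictOrderedRing 𝕜] {s : Set 𝕜} {f : 𝕜 → 𝕜} (hf : ConcaveOn 𝕜 s f) {x y d : 𝕜}
    (hx : x ∈ s) (hyd : y + d ∈ s) (hxy : x ≤ y) (hd : 0 ≤ d) :
    f (y + d) - f y ≤ f (x + d) - f x := by
  have hyx : 0 ≤ y - x := sub_nonneg.2 hxy
  rcases (add_nonneg hyx hd).eq_or_lt with hL | hL
  · obtain rfl : d = 0 := by linarith
    simp
  have ha : 0 ≤ d / (y - x + d) := by positivity
  have hb : 0 ≤ (y - x) / (y - x + d) := by positivity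
  have hab : d / (y - x + d) + (y - x) / (y - x + d) = 1 := by field_simp; ring
  -- `y` and `x + d` are the convex combinations of `x` and `y + d` with swapped weights.
  have hy := hf.2 hx hyd ha hb hab
  have hxd := hf.2 hx hyd hb ha ((add_comm _ _).trans hab)
  simp only [smul_eq_mul] at hy hxd
  rw [show d / (y - x + d) * x + (y - x) / (y - x + d) * (y + d) = y by field_simp; ring] at hy
  rw [show (y - x) / (y - x + d) * x + d / (y - x + d) * (y + d) = x + d by field_simp; ring]
    at hxd
  linear_combination hy + hxd - (f x + f (y + d)) * hab

lemma hasDerivAt_negMulLog_sub_negMulLog_one_sub {t : ℝ} (ht₀ : t ≠ 0) (ht₁ : t ≠ 1) :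
    HasDerivAt (fun t ↦ negMulLog t - negMulLog (1 - t)) (-log (t * (1 - t)) - 2) t := by
  have ht₁' : 1 - t ≠ 0 := sub_ne_zero.2 (Ne.symm ht₁)
  have h := (hasDerivAt_negMulLog ht₀).sub
    ((hasDerivAt_negMulLog ht₁').comp t ((hasDerivAt_id t).const_sub 1))
  refine h.congr_deriv ?_
  rw [log_mul ht₀ ht₁']
  ring

lemma concaveOn_negMulLog_sub_negMulLog_one_sub :
    ConcaveOn ℝ (Icc 0 2⁻¹) (fun t ↦ negMulLog t - negMulLog (1 - t)) := by
  have hderiv : ∀ t ∈ interior (Icc (0 : ℝ) 2⁻¹),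
      HasDerivAt (fun t ↦ negMulLog t - negMulLog (1 - t)) (-log (t * (1 - t)) - 2) t := by
    rw [interior_Icc]
    rintro t ⟨ht₀, ht₁⟩
    exact hasDerivAt_negMulLog_sub_negMulLog_one_sub ht₀.ne' (by linarith)
  refine AntitoneOn.concaveOn_of_deriv (convex_Icc _ _) (by fun_prop)
    (fun t ht ↦ (hderiv t ht).differentiableAt.differentiableWithinAt) ?_
  intro s hs t ht hst
  rw [(hderiv s hs).deriv, (hderiv t ht).deriv]
  rw [interior_Icc] at hs ht
  have : s * (1 - s) ≤ t * (1 - t) := by nlinarith [hs.2, ht.2]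
  have := log_le_log (by nlinarith [hs.1, hs.2]) this
  linarith

lemma negMulLog_one_sub_le {d : ℝ} (hd₀ : 0 ≤ d) (hd : d ≤ 2⁻¹) :
    negMulLog (1 - d) ≤ negMulLog d := by
  -- The concave difference vanishes at both endpoints `0` and `1/2`.
  have := concaveOn_negMulLog_sub_negMulLog_one_sub.min_le_of_mem_Icc
    (left_mem_Icc.2 (by norm_num)) (right_mem_Icc.2 (by norm_num)) ⟨hd₀, hd⟩
  norm_num at this
  linarith

lemma abs_negMulLog_add_sub_negMulLog_le {x d : ℝ} (hx : 0 ≤ x) (hd₀ : 0 ≤ d)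
    (hxd : x + d ≤ 1) (hd : d ≤ 2⁻¹) :
    |negMulLog (x + d) - negMulLog x| ≤ negMulLog d := by
  have hη := concaveOn_negMulLog
  have hupper : negMulLog (x + d) - negMulLog x ≤ negMulLog d := by
    simpa using hη.map_add_sub_map_le (mem_Ici.2 le_rfl) (mem_Ici.2 (by linarith)) hx hd₀
  have hlower : -negMulLog (1 - d) ≤ negMulLog (x + d) - negMulLog x := by
    simpa using hη.map_add_sub_map_le (mem_Ici.2 hx) (by simp) (by linarith : x ≤ 1 - d) hd₀
  rw [abs_le]
  constructor <;> linarith [negMulLog_one_sub_le hd₀ hd]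

lemma abs_negMulLog_sub_negMulLog_le {x y : ℝ} (hx₀ : 0 ≤ x) (hy₀ : 0 ≤ y) (hx₁ : x ≤ 1)
    (hy₁ : y ≤ 1) (hxy : |x - y| ≤ 2⁻¹) :
    |negMulLog x - negMulLog y| ≤ negMulLog |x - y| := by
  wlog hle : x ≤ y generalizing x y
  · simpa only [abs_sub_comm] using
      this hy₀ hx₀ hy₁ hx₁ (by rwa [abs_sub_comm]) (le_of_not_ge hle)
  rw [abs_sub_comm x y, abs_of_nonneg (sub_nonneg.2 hle)] at hxy ⊢
  rw [abs_sub_comm]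
  simpa using abs_negMulLog_add_sub_negMulLog_le hx₀ (sub_nonneg.2 hle) (by simpa) hxy

lemma sum_negMulLog_le_card_mul_negMulLog_mean {ι : Type*} [Fintype ι] [Nonempty ι]
    {r : ι → ℝ} (hr : ∀ i, 0 ≤ r i) :
    ∑ i, negMulLog (r i) ≤ Fintype.card ι * negMulLog ((∑ i, r i) / Fintype.card ι) := by
  have hn : (0 : ℝ) < Fintype.card ι := by exact_mod_cast Fintype.card_pos
  have hJensen := concaveOn_negMulLog.le_map_sum (t := univ) (w := fun _ ↦ (Fintype.card ι : ℝ)⁻¹)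
    (p := r) (fun _ _ ↦ by positivity) (by simp [hn.ne']) (fun i _ ↦ hr i)
  simp only [smul_eq_mul, ← mul_sum] at hJensen
  rw [inv_mul_eq_div] at hJensen
  rwa [inv_mul_eq_div, div_le_iff₀ hn, mul_comm] at hJensen

lemma entH_eq_sum_negMulLog_div {A : Type*} [Fintype A] (p : A → ℝ) :
    entH p = (∑ x, negMulLog (p x)) / log 2 := by
  simp only [entH, negMulLog, logb, sum_div, ← sum_neg_distrib]
  congr 1 with x
  ring

theorem stmt0_general {A : Type*} [Fintype A] [Nonempty A]
    (p q : A → ℝ) (hp0 : ∀ x, 0 ≤ p x) (hq0 : ∀ x, 0 ≤ q x)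
    (hp1 : ∑ x : A, p x = 1) (hq1 : ∑ x : A, q x = 1)
    (h : L1 p q ≤ 1 / 2) :
    |entH p - entH q| ≤ -(L1 p q) * Real.logb 2 (L1 p q / (Fintype.card A)) := by
  have hp_le x : p x ≤ 1 := hp1 ▸ single_le_sum (fun i _ ↦ hp0 i) (mem_univ x)
  have hq_le x : q x ≤ 1 := hq1 ▸ single_le_sum (fun i _ ↦ hq0 i) (mem_univ x)
  have hpq_le x : |p x - q x| ≤ 2⁻¹ :=
    (single_le_sum (fun i _ ↦ abs_nonneg (p i - q i)) (mem_univ x)).trans (h.trans_eq (one_div 2))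
  have hlog2 : 0 < log 2 := log_pos one_lt_two
  rw [entH_eq_sum_negMulLog_div, entH_eq_sum_negMulLog_div, ← sub_div, abs_div,
    abs_of_pos hlog2]
  calc |∑ x, negMulLog (p x) - ∑ x, negMulLog (q x)| / log 2
      ≤ (∑ x, negMulLog |p x - q x|) / log 2 := by
        gcongr
        rw [← sum_sub_distrib]
        exact (abs_sum_le_sum_abs _ _).trans <| sum_le_sum fun x _ ↦
          abs_negMulLog_sub_negMulLog_le (hp0 x) (hq0 x) (hp_le x) (hq_le x) (hpq_le x)
    _ ≤ Fintype.card A * negMulLog (L1 p q / Fintype.card A) / log 2 := by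
        gcongr
        exact sum_negMulLog_le_card_mul_negMulLog_mean fun x ↦ abs_nonneg _
    _ = -(L1 p q) * logb 2 (L1 p q / Fintype.card A) := by
        have hn : (Fintype.card A : ℝ) ≠ 0 := by exact_mod_cast Fintype.card_ne_zero
        rw [negMulLog, logb]
        field_simp

theorem stmt0 {A : Type*} [Fintype A] [DecidableEq A] [Nonempty A]
    (p q : A → ℝ) (hp0 : ∀ x, 0 ≤ p x) (hq0 : ∀ x, 0 ≤ q x)
    (hp1 : ∑ x : A, p x = 1) (hq1 : ∑ x : A, q x = 1)
    (h : L1 p q ≤ 1 / 2) :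
    |entH p - entH q| ≤ -(L1 p q) * Real.logb 2 (L1 p q / (Fintype.card A)) :=
  stmt0_general p q hp0 hq0 hp1 hq1 h
end

section
/- Let T = T₁ c T₂ and T′ = T₁ c′ T₂ be two strings differing in exactly one character position (where T₁, T₂ are strings and c, c′ are characters). For any k ≥ 1, among all contexts s ∈ A^k, the context-strings T^{(s)} and T′^{(s)} differ for at most 2k+1 distinct contexts s; for every other context s, T^{(s)} = T′^{(s)}. -/
open Finset

def ctxStr {A : Type*} [DecidableEq A] (T s : List A) : List A :=
  ((List.range T.length).filter (fun i =>
      decide (s.length ≤ i ∧ (T.drop (i - s.length)).take s.length = s))).filterMap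
    (fun i => T[i]?)

/-!
Replacing the character at position `p` of `T` (giving `T'`) only affects the contexts that read it: the `k` windows
of `T` and the `k` windows of `T'` that cover position `p`, and the context of position `p`
itself, whose character changes although the window does not. Every other context selects the
same positions in `T` and `T'`, and reads the same characters there.
-/

namespace ContextString

variable {A : Type*}

/-- The `k` characters preceding position `i`; for `i < k` it is junk (the prefix of length `k`). -/
def window (T : List A) (k i : ℕ) : List A :=
  (T.drop (i - k)).take k

theorem window_congr {T T' : List A} {k i : ℕ}
    (h : ∀ j < k, T[i - k + j]? = T'[i - k + j]?) : window T k i = window T' k i := by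
  refine List.ext_getElem? fun j => ?_
  simp only [window, List.getElem?_take, List.getElem?_drop]
  split_ifs with hj
  exacts [h j hj, rfl]

theorem window_set_of_notMem {T : List A} {p k i : ℕ} (a : A) (hki : k ≤ i)
    (hp : i ≤ p ∨ p + k < i) : window (T.set p a) k i = window T k i :=
  window_congr fun j hj => List.getElem?_set_ne (by omega)

theorem ctxStr_eq_filterMap_window [DecidableEq A] (T s : List A) :
    ctxStr T s = ((List.range T.length).filter fun i =>
      decide (s.length ≤ i ∧ window T s.length i = s)).filterMap (T[·]?) :=
  rfl

theorem ctxStr_congr [DecidableEq A] {T T' s : List A} (hlen : T.length = T'.length)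
    (hctx : ∀ i, s.length ≤ i → (window T s.length i = s ↔ window T' s.length i = s))
    (hchar : ∀ i, s.length ≤ i → window T s.length i = s → T[i]? = T'[i]?) :
    ctxStr T s = ctxStr T' s := by
  have hpred : ∀ i, decide (s.length ≤ i ∧ window T s.length i = s)
      = decide (s.length ≤ i ∧ window T' s.length i = s) := fun i =>
    decide_eq_decide.2 ⟨fun ⟨hi, hw⟩ => ⟨hi, (hctx i hi).1 hw⟩,
      fun ⟨hi, hw⟩ => ⟨hi, (hctx i hi).2 hw⟩⟩
  rw [ctxStr_eq_filterMap_window, ctxStr_eq_filterMap_window, ← hlen, List.filter_congr fun i _ => hpred i]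
  refine List.filterMap_congr fun i hi => ?_
  obtain ⟨hi, hw⟩ := of_decide_eq_true (List.mem_filter.1 hi).2
  exact hchar i hi ((hctx i hi).2 hw)

variable [DecidableEq A]

def changedContexts (T : List A) (p : ℕ) (a : A) (k : ℕ) : Finset (List A) :=
  (range (k + 1)).image (fun j => window T k (p + j)) ∪
    (range k).image (fun j => window (T.set p a) k (p + j + 1))

theorem card_changedContexts_le (T : List A) (p : ℕ) (a : A) (k : ℕ) :
    #(changedContexts T p a k) ≤ 2 * k + 1 := by
  calc #(changedContexts T p a k)
      ≤ #((range (k + 1)).image fun j => window T k (p + j)) +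
          #((range k).image fun j => window (T.set p a) k (p + j + 1)) := card_union_le _ _
    _ ≤ #(range (k + 1)) + #(range k) := add_le_add card_image_le card_image_le
    _ = 2 * k + 1 := by simp only [card_range]; ring

theorem ctxStr_set_of_notMem_changedContexts {T s : List A} {p : ℕ} {a : A}
    (hs : s ∉ changedContexts T p a s.length) : ctxStr (T.set p a) s = ctxStr T s := by
  set k := s.length
  have hT : ∀ j ≤ k, window T k (p + j) ≠ s := fun j hj h =>
    hs (mem_union_left _ (mem_image.2 ⟨j, mem_range.2 (by omega), h⟩))
  have hT' : ∀ j < k, window (T.set p a) k (p + j + 1) ≠ s := fun j hj h =>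
    hs (mem_union_right _ (mem_image.2 ⟨j, mem_range.2 hj, h⟩))
  refine ctxStr_congr List.length_set (fun i hki => ?_) (fun i hki hw => ?_)
  · by_cases hp : i ≤ p ∨ p + k < i
    · rw [window_set_of_notMem a hki hp]
    · have hTi := hT (i - p) (by omega)
      have hT'i := hT' (i - p - 1) (by omega)
      rw [show p + (i - p) = i by omega] at hTi
      rw [show p + (i - p - 1) + 1 = i by omega] at hT'i
      exact iff_of_false hT'i hTi
  · refine List.getElem?_set_ne fun hpi => hT 0 (Nat.zero_le _) ?_
    rw [window_set_of_notMem a hki (.inl hpi.ge)] at hw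
    rwa [Nat.add_zero, hpi]

end ContextString

open ContextString in
theorem stmt11_general {A : Type*} [Fintype A] [DecidableEq A]
    (T₁ T₂ : List A) (c c' : A) (k : ℕ) :
    (Finset.univ.filter (fun s : Fin k → A =>
        ctxStr (T₁ ++ c :: T₂) (List.ofFn s) ≠ ctxStr (T₁ ++ c' :: T₂) (List.ofFn s))).card
      ≤ 2 * k + 1 := by
  have hset : T₁ ++ c' :: T₂ = (T₁ ++ c :: T₂).set T₁.length c' := by
    simp [List.set_append_right]
  rw [hset]
  calc _ ≤ #(changedContexts (T₁ ++ c :: T₂) T₁.length c' k) := by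
        refine card_le_card_of_injOn List.ofFn (fun s hs => ?_) List.ofFn_injective.injOn
        by_contra hnot
        refine (mem_filter.1 hs).2 (ctxStr_set_of_notMem_changedContexts ?_).symm
        rwa [List.length_ofFn]
    _ ≤ 2 * k + 1 := card_changedContexts_le _ _ _ _

theorem stmt11 {A : Type*} [Fintype A] [DecidableEq A]
    (T₁ T₂ : List A) (c c' : A) (k : ℕ) (hk : 1 ≤ k) :
    (Finset.univ.filter (fun s : Fin k → A =>
        ctxStr (T₁ ++ c :: T₂) (List.ofFn s) ≠ ctxStr (T₁ ++ c' :: T₂) (List.ofFn s))).card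
      ≤ 2 * k + 1 :=
  stmt11_general T₁ T₂ c c' k
end

section
/- Consider the memory management scheme storing m variable-length binary strings (each of length at most b bits) in segments of b + 4p bits each (p = Θ(log(mb))), where all strings of the same length x are packed contiguously into the segments of a doubly-linked list L_x with at most one partially-filled segment per list. If s is the total length in bits of all stored strings, then the total number of segments used is at most s/b + b, and hence the total segment space is at most s(1 + 4p/b) + b(b + 4p) bits, which is s + O(b² + m log m) bits when b ≤ m, p = O(log m), and s ≤ bm. -/
/-! A list `L_x` holding strings of total length `s_x` needs `⌈s_x / b⌉ ≤ s_x / b + 1`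
segments, so the `b` lists together need at most `s / b + b` segments. Each segment costs
`b + 4p` bits, and the overhead `4p · s / b + 4p · b + b²` is `O(b² + m log m)` because
`s / b ≤ m`, `b ≤ m` and `p = O(log m)`. -/

open Finset

theorem Nat.cast_add_sub_one_div_le (a b : ℕ) :
    (((a + b - 1) / b : ℕ) : ℝ) ≤ a / b + 1 := by
  rcases b.eq_zero_or_pos with rfl | hb
  · simp
  have hb' : (0 : ℝ) < b := by exact_mod_cast hb
  calc (((a + b - 1) / b : ℕ) : ℝ) ≤ ((a + b - 1 : ℕ) : ℝ) / b := Nat.cast_div_le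
    _ ≤ ((a + b : ℕ) : ℝ) / b := by gcongr; omega
    _ = a / b + 1 := by push_cast; field_simp

theorem sum_cast_add_sub_one_div_le {ι : Type*} [Fintype ι] (s : ι → ℕ) (b : ℕ) :
    ((∑ x, (s x + b - 1) / b : ℕ) : ℝ) ≤ (∑ x, (s x : ℝ)) / b + Fintype.card ι := by
  push_cast
  calc ∑ x, (((s x + b - 1) / b : ℕ) : ℝ) ≤ ∑ x, ((s x : ℝ) / b + 1) :=
        sum_le_sum fun x _ => Nat.cast_add_sub_one_div_le (s x) b
    _ = (∑ x, (s x : ℝ)) / b + Fintype.card ι := by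
        rw [sum_add_distrib, ← sum_div, sum_const, card_univ, nsmul_one]

theorem mul_add_le_of_le_div_add {N S b k q : ℝ} (hb : 0 < b) (hq : 0 ≤ q)
    (hN : N ≤ S / b + k) : N * (b + q) ≤ S * (1 + q / b) + k * (b + q) := by
  calc N * (b + q) ≤ (S / b + k) * (b + q) := by gcongr
    _ = S * (1 + q / b) + k * (b + q) := by field_simp

theorem space_overhead_le {S b m p L c₀ : ℝ} (hb : 0 < b) (hSb : S ≤ b * m) (hbm : b ≤ m)
    (hp₀ : 0 ≤ p) (hp : p ≤ c₀ * L) (hc₀ : 0 ≤ c₀) (hmL : 0 ≤ m * L) :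
    S * (1 + 4 * p / b) + b * (b + 4 * p) ≤ S + (8 * c₀ + 1) * (b ^ 2 + m * L) := by
  have hm : 0 ≤ m := hb.le.trans hbm
  have hS : S / b ≤ m := by rw [div_le_iff₀ hb]; linarith
  have hdata : S * (4 * p / b) ≤ 4 * c₀ * (m * L) :=
    calc S * (4 * p / b) = S / b * (4 * p) := by ring
      _ ≤ m * (4 * (c₀ * L)) := mul_le_mul hS (by linarith) (by positivity) hm
      _ = 4 * c₀ * (m * L) := by ring
  have hpointers : b * (4 * p) ≤ 4 * c₀ * (m * L) :=
    calc b * (4 * p) ≤ m * (4 * (c₀ * L)) := mul_le_mul hbm (by linarith) (by positivity) hm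
      _ = 4 * c₀ * (m * L) := by ring
  nlinarith [sq_nonneg b]

theorem stmt16 : ∀ c₀ : ℝ, 0 < c₀ → ∃ C : ℝ, 0 < C ∧
    ∀ (b m p : ℕ) (sx : Fin b → ℕ), 0 < b → b ≤ m → 2 ≤ m →
      (p : ℝ) ≤ c₀ * Real.logb 2 m →
      (∑ x, sx x) ≤ b * m →
      ((∑ x, (sx x + b - 1) / b : ℕ) : ℝ) ≤ (∑ x, (sx x : ℝ)) / b + b ∧
      ((∑ x, (sx x + b - 1) / b : ℕ) : ℝ) * (b + 4 * p) ≤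
        (∑ x, (sx x : ℝ)) * (1 + 4 * p / b) + b * (b + 4 * p) ∧
      ((∑ x, (sx x + b - 1) / b : ℕ) : ℝ) * (b + 4 * p) ≤
        (∑ x, (sx x : ℝ)) + C * (b ^ 2 + m * Real.logb 2 m) := by
  intro c₀ hc₀
  refine ⟨8 * c₀ + 1, by positivity, fun b m p sx hb hbm hm hp hS => ?_⟩
  have hb' : (0 : ℝ) < b := by exact_mod_cast hb
  have hcount := sum_cast_add_sub_one_div_le sx b
  rw [Fintype.card_fin] at hcount
  have hspace := mul_add_le_of_le_div_add hb' (q := 4 * p) (by positivity) hcount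
  have hSbm : ∑ x, (sx x : ℝ) ≤ b * m := by exact_mod_cast hS
  have hlog : 0 ≤ Real.logb 2 m :=
    Real.logb_nonneg one_lt_two (by exact_mod_cast (by omega : 1 ≤ m))
  exact ⟨hcount, hspace, hspace.trans (space_overhead_le hb' hSbm (by exact_mod_cast hbm)
    (by positivity) hp hc₀.le (by positivity))⟩
end
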